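/- The interpretation M_P is a fixpoint of T_P, and every fixpoint of T_P is an infinite-valued model of P; in particular M_P is a model of P (for every clause p ← body in P, M_P(p) ≥ M_P(body)). -/

import Mathlib

open Ordinal Set

noncomputable section
attribute [local instance] Classical.propDecidable

namespace IVS

/-- Countable ordinals: ordinals below `ω₁`. -/
abbrev Ord1 := {o : Ordinal.{0} // o < ω₁}

theorem zero_lt_omega1 : (0 : Ordinal) < ω₁ := omega_pos 1

theorem succ_lt_omega1 {o : Ordinal} (h : o < ω₁) : o + 1 < ω₁ := by
  have h' := (Cardinal.isSuccLimit_omega 1).succ_lt h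
  first
  | simpa only [Order.succ_eq_add_one] using h'
  | simpa using h'

/-- zero as a countable ordinal -/
def O0 : Ord1 := ⟨0, zero_lt_omega1⟩

/-- successor on countable ordinals -/
def Ord1.succ (a : Ord1) : Ord1 := ⟨a.1 + 1, succ_lt_omega1 a.2⟩

/-- The truth domain `V`: `F_α < ⋯ < 0 < ⋯ < T_α` realized as a lexicographic sum. -/
abbrev TV := Ord1 ⊕ₗ (Unit ⊕ₗ Ord1ᵒᵈ)

/-- the false value `F_α` -/
def TV.F (a : Ord1) : TV := toLex (Sum.inl a)
/-- the middle value `0` -/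
def TV.Z : TV := toLex (Sum.inr (toLex (Sum.inl ())))
/-- the true value `T_α` -/
def TV.T (a : Ord1) : TV := toLex (Sum.inr (toLex (Sum.inr (OrderDual.toDual a))))

/-- the order of a truth value (`⊤` codes `+∞`, the order of `0`) -/
def ordOf (v : TV) : WithTop Ordinal :=
  match ofLex v with
  | .inl a => (a.1 : Ordinal)
  | .inr b =>
    match ofLex b with
    | .inl _ => ⊤
    | .inr a => ((OrderDual.ofDual a).1 : Ordinal)

/-- negation-as-failure: `¬F_α = T_{α+1}`, `¬T_α = F_{α+1}`, `¬0 = 0`. -/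
def negv (v : TV) : TV :=
  match ofLex v with
  | .inl a => TV.T a.succ
  | .inr b =>
    match ofLex b with
    | .inl _ => TV.Z
    | .inr a => TV.F (OrderDual.ofDual a).succ

/-- Literals of a propositional normal program (atoms are natural numbers). -/
inductive Lit where
  | pos (n : ℕ)
  | neg (n : ℕ)
  | tt
  | ff

/-- A normal program clause: a head atom and a body which is a conjunction of literals. -/
structure Clause where
  head : ℕ
  body : List Lit

/-- A (possibly infinite) propositional normal logic program. -/
abbrev Program := Set Clause

/-- Infinite-valued interpretations. -/
abbrev Interp := ℕ → TV

/-- the interpretation assigning `F₀` to every atom (denoted `∅` in the paper) -/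
def botI : Interp := fun _ => TV.F O0

def evalLit (I : Interp) : Lit → TV
  | .pos n => I n
  | .neg n => negv (I n)
  | .tt => TV.T O0
  | .ff => TV.F O0

/-- value of a body (conjunction evaluated by `min`; empty conjunction is `T₀`) -/
def evalBody (I : Interp) (b : List Lit) : TV :=
  (b.map (evalLit I)).foldr min (TV.T O0)

/-- least upper bound in `V` (well-defined by the lub-existence theorem) -/
def lub (S : Set TV) : TV := if h : ∃ v, IsLUB S v then h.choose else TV.Z

/-- the immediate consequence operator -/
def TP (P : Program) (I : Interp) : Interp :=
  fun p => lub {v | ∃ c ∈ P, c.head = p ∧ evalBody I c.body = v}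

/-- `I` is an (infinite-valued) model of `P` -/
def isModel (P : Program) (I : Interp) : Prop :=
  ∀ c ∈ P, evalBody I c.body ≤ I c.head

/-- the level set `I ∥ v` -/
def level (I : Interp) (v : TV) : Set ℕ := {p | I p = v}

/-- `I =_α J` -/
def eqA (α : Ord1) (I J : Interp) : Prop :=
  ∀ β ≤ α, level I (TV.T β) = level J (TV.T β) ∧ level I (TV.F β) = level J (TV.F β)

/-- `I ⊏_α J` -/
def sqltA (α : Ord1) (I J : Interp) : Prop :=
  (∀ β < α, eqA β I J) ∧
    ((level I (TV.T α) ⊂ level J (TV.T α) ∧ level J (TV.F α) ⊆ level I (TV.F α)) ∨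
     (level I (TV.T α) ⊆ level J (TV.T α) ∧ level J (TV.F α) ⊂ level I (TV.F α)))

/-- `I ⊑_α J` -/
def sqleA (α : Ord1) (I J : Interp) : Prop := eqA α I J ∨ sqltA α I J

/-- `I ⊏_∞ J` -/
def sqltInf (I J : Interp) : Prop := ∃ α : Ord1, sqltA α I J

/-- `I ⊑_∞ J` -/
def sqleInf (I J : Interp) : Prop := I = J ∨ sqltInf I J

/-- the sequence `T_P^n(I)` is an `α`-chain -/
def isChainA (P : Program) (α : Ord1) (I : Interp) : Prop :=
  ∀ n : ℕ, sqleA α ((TP P)^[n] I) ((TP P)^[n + 1] I)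

/-- the interpretation `T_{P,α}^ω(I)` -/
def TPomega (P : Program) (α : Ord1) (I : Interp) : Interp := fun p =>
  if ordOf (I p) < (α.1 : WithTop Ordinal) then I p
  else if ∃ n : ℕ, (TP P)^[n] I p = TV.T α then TV.T α
  else if ∀ n : ℕ, (TP P)^[n] I p = TV.F α then TV.F α
  else TV.F α.succ

/-- `⊔_{β<α} M_β` for a family defined below `α` -/
def sqcupI (α : Ord1) (f : ∀ β : Ordinal, β < α.1 → Interp) : Interp := fun p =>
  if h : ∃ β : Ordinal, ∃ hb : β < α.1, ordOf (f β hb p) = (β : WithTop Ordinal)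
  then f h.choose h.choose_spec.choose p
  else TV.F α

/-- the approximations `M_α` to the minimum model (junk values for `α ≥ ω₁`) -/
def MA (P : Program) (o : Ordinal) : Interp :=
  Ordinal.limitRecOn o
    (TPomega P O0 botI)
    (fun o' ih => if h : o' + 1 < ω₁ then TPomega P ⟨o' + 1, h⟩ ih else ih)
    (fun o' _ ih =>
      if h : o' < ω₁ then TPomega P ⟨o', h⟩ (sqcupI ⟨o', h⟩ ih) else botI)

/-- `M_α` for a countable ordinal `α` -/
def Mα (P : Program) (α : Ord1) : Interp := MA P α.1

/-- the defining property of the depth `δ` of a program -/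
def isDepth (P : Program) (δ : Ord1) : Prop :=
  (level (Mα P δ) (TV.T δ) = ∅ ∧ level (Mα P δ) (TV.F δ) = ∅) ∧
    ∀ β : Ord1, β < δ →
      (level (Mα P β) (TV.T β) ≠ ∅ ∨ level (Mα P β) (TV.F β) ≠ ∅)

/-- the depth of a program -/
def depth (P : Program) : Ord1 :=
  if h : ∃ δ : Ord1, isDepth P δ then h.choose else O0

/-- the minimum model `M_P` -/
def MP (P : Program) : Interp := fun p =>
  if ordOf (Mα P (depth P) p) < ((depth P).1 : WithTop Ordinal)
  then Mα P (depth P) p else TV.Z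

/-- the set of all infinite-valued models of `P` -/
def models (P : Program) : Set Interp := {I | isModel P I}

/-- `M ♯ α`: the part of `M` consisting of values of order `α` -/
def sharp (I : Interp) (α : Ord1) : Set (ℕ × TV) :=
  {pv | I pv.1 = pv.2 ∧ ordOf pv.2 = (α.1 : WithTop Ordinal)}

/-- `⨀^α S = ⋀^α S ∪ ⋁^α S` -/
def odot (α : Ord1) (S : Set Interp) : Set (ℕ × TV) :=
  {pv | (∃ p : ℕ, pv = (p, TV.T α) ∧ ∀ M ∈ S, M p = TV.T α) ∨
        (∃ p : ℕ, pv = (p, TV.F α) ∧ ∃ M ∈ S, M p = TV.F α)}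

/-- the sets `S_α` of the model intersection construction (junk for `α ≥ ω₁`) -/
def SA (P : Program) (o : Ordinal) : Set Interp :=
  Ordinal.limitRecOn o
    {M ∈ models P | sharp M O0 = odot O0 (models P)}
    (fun o' ih =>
      if h : o' + 1 < ω₁ then {M ∈ ih | sharp M ⟨o' + 1, h⟩ = odot ⟨o' + 1, h⟩ ih} else ih)
    (fun o' _ ih =>
      if h : o' < ω₁ then
        {M : Interp | M ∈ (⋂ (b : Ordinal) (hb : b < o'), ih b hb) ∧
          sharp M ⟨o', h⟩ = odot ⟨o', h⟩ (⋂ (b : Ordinal) (hb : b < o'), ih b hb)}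
      else ∅)

/-!
Say that `I` and `J` agree below order `g` when they coincide once every value of order `≥ g` is
collapsed to `0`. Since `min`, `lub` and negation commute with this collapse, `T_P` preserves
agreement below any order.

Let `J` be a fixpoint of `T_P` below order `g` whose remaining values are `F_g`. The iterates
`T_P^n(J)` then form a chain along which the thresholds `T_g ≤ ·` and `F_g < ·` only switch on,
and `T_{P,g}^ω(J)` is their limit as far as order `g` can tell. A body is a finite conjunction, so
`T_P` is continuous along such chains: `T_P(T_{P,g}^ω(J))` is the limit of the shifted chain,
which is again `T_{P,g}^ω(J)`. Hence one stage raises the order below which we have a fixpoint by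
one, and transfinite induction (through the coherence of the `M_β` at limits) shows that
`T_P(M_α)` agrees with `M_α` below order `α + 1`.

If no depth existed, every `M_α` would have an atom of order `α`; by persistence these atoms are
distinct, which embeds `ω₁` into `ℕ`. At the depth `δ`, `M_δ` has no value of order `δ`, so `M_P`
(which is `M_δ` with the values of order `≥ δ` replaced by `0`) agrees with `M_δ` below order
`δ + 1`; then so does `T_P(M_P)` with `T_P(M_δ)`, and hence with `M_P`. Since negation raises
orders by exactly one, `T_P(M_P)` takes no value of order `> δ` other than `0`; so
`T_P(M_P) = M_P`. Every fixpoint is a model because each body value is bounded by the value of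
`T_P` at its head.
-/

theorem Ord1.lt_succ_iff {a b : Ord1} : a < b.succ ↔ a ≤ b := by
  rw [← Subtype.coe_lt_coe, ← Subtype.coe_le_coe]
  exact Order.lt_add_one_iff

theorem Ord1.succ_le_iff {a b : Ord1} : a.succ ≤ b ↔ a < b := by
  rw [← Subtype.coe_lt_coe, ← Subtype.coe_le_coe]
  exact Order.add_one_le_iff

theorem Ord1.lt_succ (a : Ord1) : a < a.succ := Ord1.lt_succ_iff.2 le_rfl

theorem Ord1.zero_le (a : Ord1) : O0 ≤ a := Subtype.coe_le_coe.1 _root_.zero_le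

theorem Ord1.zero_or_succ_or_isSuccLimit (a : Ord1) :
    a = O0 ∨ (∃ b, a = Ord1.succ b) ∨ Order.IsSuccLimit a.1 := by
  rcases Ordinal.zero_or_succ_or_isSuccLimit a.1 with h | ⟨b, hb⟩ | h
  · exact Or.inl (Subtype.ext h)
  · have hb' : b < ω₁ := lt_of_lt_of_le (Order.lt_succ b) (hb ▸ a.2.le)
    exact Or.inr (Or.inl ⟨⟨b, hb'⟩, Subtype.ext (hb.symm.trans (Order.succ_eq_add_one b))⟩)
  · exact Or.inr (Or.inr h)

theorem Ord1.induction {motive : Ord1 → Prop} (zero : motive O0)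
    (succ : ∀ a, motive a → motive a.succ)
    (limit : ∀ a, Order.IsSuccLimit a.1 → (∀ b < a, motive b) → motive a) (a : Ord1) :
    motive a := by
  induction a using WellFoundedLT.induction with
  | _ a ih =>
    rcases a.zero_or_succ_or_isSuccLimit with rfl | ⟨b, rfl⟩ | h
    · exact zero
    · exact succ b (ih b (Ord1.lt_succ b))
    · exact limit a h ih

theorem TV.cases (v : TV) : (∃ a, v = TV.F a) ∨ v = TV.Z ∨ ∃ a, v = TV.T a := by
  rcases h : ofLex v with a | b
  · exact Or.inl ⟨a, by rw [TV.F, ← h, toLex_ofLex]⟩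
  · rcases hb : ofLex b with u | a
    · refine Or.inr (Or.inl ?_)
      have hb' : b = toLex (Sum.inl ()) := by rw [← hb, toLex_ofLex]
      rw [TV.Z, ← toLex_ofLex v, h, hb']
    · refine Or.inr (Or.inr ⟨OrderDual.ofDual a, ?_⟩)
      have hb' : b = toLex (Sum.inr a) := by rw [← hb, toLex_ofLex]
      rw [TV.T, ← toLex_ofLex v, h, hb']
      rfl

namespace TV

@[simp] theorem F_le_F {a b : Ord1} : F a ≤ F b ↔ a ≤ b := by
  simp [F, Sum.Lex.toLex_le_toLex]

@[simp] theorem F_lt_F {a b : Ord1} : F a < F b ↔ a < b := by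
  simp [F, Sum.Lex.toLex_lt_toLex]

@[simp] theorem T_le_T {a b : Ord1} : T a ≤ T b ↔ b ≤ a := by
  simp [T, Sum.Lex.toLex_le_toLex]

@[simp] theorem T_lt_T {a b : Ord1} : T a < T b ↔ b < a := by
  simp [T, Sum.Lex.toLex_lt_toLex]

@[simp] theorem F_lt_Z {a : Ord1} : F a < Z := by
  simp [F, Z, Sum.Lex.toLex_lt_toLex]

@[simp] theorem Z_lt_T {a : Ord1} : Z < T a := by
  simp [Z, T, Sum.Lex.toLex_lt_toLex]

@[simp] theorem F_lt_T {a b : Ord1} : F a < T b := by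
  simp [F, T, Sum.Lex.toLex_lt_toLex]

@[simp] theorem F_le_Z {a : Ord1} : F a ≤ Z := F_lt_Z.le
@[simp] theorem Z_le_T {a : Ord1} : Z ≤ T a := Z_lt_T.le
@[simp] theorem F_le_T {a b : Ord1} : F a ≤ T b := F_lt_T.le
@[simp] theorem not_T_le_F {a b : Ord1} : ¬ T a ≤ F b := not_le.2 F_lt_T
@[simp] theorem not_Z_lt_F {a : Ord1} : ¬ Z < F a := not_lt.2 F_le_Z
@[simp] theorem not_T_lt_Z {a : Ord1} : ¬ T a < Z := not_lt.2 Z_le_T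
@[simp] theorem not_T_lt_F {a b : Ord1} : ¬ T a < F b := not_lt.2 F_le_T

theorem le_T_zero (v : TV) : v ≤ T O0 := by
  rcases TV.cases v with ⟨a, rfl⟩ | rfl | ⟨a, rfl⟩ <;> simp [Ord1.zero_le]

theorem F_zero_le (v : TV) : F O0 ≤ v := by
  rcases TV.cases v with ⟨a, rfl⟩ | rfl | ⟨a, rfl⟩ <;> simp [Ord1.zero_le]

theorem T_succ_lt_iff {a : Ord1} {v : TV} : T a.succ < v ↔ T a ≤ v := by
  rcases TV.cases v with ⟨b, rfl⟩ | rfl | ⟨b, rfl⟩ <;> simp [Ord1.lt_succ_iff]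

theorem lt_F_succ_iff {a : Ord1} {v : TV} : v < F a.succ ↔ v ≤ F a := by
  rcases TV.cases v with ⟨b, rfl⟩ | rfl | ⟨b, rfl⟩ <;> simp [Ord1.lt_succ_iff]

-- Mathlib's `lt_inf_iff` is stated for the lattice of a linear order, which is not reducibly
-- the lattice structure of the lexicographic sum used by `min` in `evalBody`.
theorem lt_inf_iff {u v w : TV} : u < v ⊓ w ↔ u < v ∧ u < w := by
  rcases le_total v w with h | h
  · rw [inf_eq_left.2 h]
    exact ⟨fun hu => ⟨hu, hu.trans_le h⟩, And.left⟩
  · rw [inf_eq_right.2 h]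
    exact ⟨fun hu => ⟨hu.trans_le h, hu⟩, And.right⟩

end TV

open TV

@[simp] theorem ordOf_F {a : Ord1} : ordOf (F a) = (a.1 : WithTop Ordinal) := rfl
@[simp] theorem ordOf_T {a : Ord1} : ordOf (T a) = (a.1 : WithTop Ordinal) := rfl
@[simp] theorem ordOf_Z : ordOf Z = ⊤ := rfl

@[simp] theorem negv_F {a : Ord1} : negv (F a) = T a.succ := rfl
@[simp] theorem negv_T {a : Ord1} : negv (T a) = F a.succ := rfl
@[simp] theorem negv_Z : negv Z = Z := rfl

theorem T_le_negv_iff {g : Ord1} {v : TV} : T g ≤ negv v ↔ v < F g := by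
  rcases TV.cases v with ⟨b, rfl⟩ | rfl | ⟨b, rfl⟩ <;> simp [Ord1.succ_le_iff]

theorem F_lt_negv_iff {g : Ord1} {v : TV} : F g < negv v ↔ v ≤ T g := by
  rcases TV.cases v with ⟨b, rfl⟩ | rfl | ⟨b, rfl⟩ <;> simp [Ord1.lt_succ_iff]

def band (g : Ord1) : Set TV := Icc (F g) (T g)

theorem mem_band_iff {g : Ord1} {v : TV} : v ∈ band g ↔ (g.1 : WithTop Ordinal) ≤ ordOf v := by
  rcases TV.cases v with ⟨b, rfl⟩ | rfl | ⟨b, rfl⟩ <;> simp [band]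

theorem notMem_band_iff {g : Ord1} {v : TV} : v ∉ band g ↔ v < F g ∨ T g < v := by
  simp only [band, mem_Icc, not_and_or, not_le]

theorem notMem_band_iff_ordOf_lt {g : Ord1} {v : TV} :
    v ∉ band g ↔ ordOf v < (g.1 : WithTop Ordinal) := by
  rw [mem_band_iff, not_le]

theorem Z_mem_band (g : Ord1) : Z ∈ band g := ⟨F_le_Z, Z_le_T⟩

theorem mem_band_zero (v : TV) : v ∈ band O0 := ⟨F_zero_le v, le_T_zero v⟩

theorem band_anti {g g' : Ord1} (h : g ≤ g') : band g' ⊆ band g :=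
  Icc_subset_Icc (F_le_F.2 h) (T_le_T.2 h)

theorem mem_band_succ_iff {g : Ord1} {v : TV} : v ∈ band g.succ ↔ F g < v ∧ v < T g := by
  rw [band, mem_Icc, ← not_lt, lt_F_succ_iff, not_le, ← not_lt, T_succ_lt_iff, not_le]

theorem negv_mem_band {g : Ord1} {v : TV} (h : v ∈ band g) : negv v ∈ band g := by
  rw [mem_band_iff] at h ⊢
  rcases TV.cases v with ⟨b, rfl⟩ | rfl | ⟨b, rfl⟩
  · exact h.trans (by simp [(Ord1.lt_succ b).le])
  · exact h
  · exact h.trans (by simp [(Ord1.lt_succ b).le])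

theorem exists_ordOf_eq_of_notMem_band {g : Ord1} {v : TV} (h : v ∉ band g) :
    ∃ b < g, ordOf v = (b.1 : WithTop Ordinal) := by
  rcases notMem_band_iff.1 h with h | h <;>
    rcases TV.cases v with ⟨b, rfl⟩ | rfl | ⟨b, rfl⟩ <;> simp at h
  · exact ⟨b, h, rfl⟩
  · exact ⟨b, h, rfl⟩

theorem notMem_band_succ_of_ordOf_eq {b : Ord1} {v : TV} (h : ordOf v = (b.1 : WithTop Ordinal)) :
    v ∉ band b.succ :=
  notMem_band_iff_ordOf_lt.2 (h ▸ WithTop.coe_lt_coe.2 (Ord1.lt_succ b))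

theorem eq_F_or_eq_T_of_mem_band {g : Ord1} {v : TV} (h : v ∈ band g) (h' : v ∉ band g.succ) :
    v = F g ∨ v = T g := by
  rw [mem_band_succ_iff, not_and_or, not_lt, not_lt] at h'
  exact h'.imp (fun h' => le_antisymm h' h.1) (fun h' => le_antisymm h.2 h')

theorem _root_.Set.OrdConnected.monotone_ite {α : Type*} [LinearOrder α] {s : Set α}
    (hs : s.OrdConnected) {c : α} (hc : c ∈ s) : Monotone fun x => if x ∈ s then c else x := by
  intro x y hxy
  dsimp only
  split_ifs with hx hy hy
  · exact le_rfl
  · exact not_lt.1 fun hyc => hy (hs.out hx hc ⟨hxy, hyc.le⟩)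
  · exact not_lt.1 fun hcx => hx (hs.out hc hy ⟨hcx.le, hxy⟩)
  · exact hxy

/-- `collapse g` identifies all values of order `≥ g` with `0`. -/
def collapse (g : Ord1) (v : TV) : TV := if v ∈ band g then Z else v

theorem collapse_of_mem {g : Ord1} {v : TV} (h : v ∈ band g) : collapse g v = Z := if_pos h

theorem collapse_of_notMem {g : Ord1} {v : TV} (h : v ∉ band g) : collapse g v = v := if_neg h

theorem monotone_collapse (g : Ord1) : Monotone (collapse g) :=
  (ordConnected_Icc : (band g).OrdConnected).monotone_ite (Z_mem_band g)

theorem collapse_min (g : Ord1) (u v : TV) :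
    collapse g (min u v) = min (collapse g u) (collapse g v) := by
  rcases le_total u v with huv | huv
  · rw [inf_eq_left.2 huv, inf_eq_left.2 (monotone_collapse g huv)]
  · rw [inf_eq_right.2 huv, inf_eq_right.2 (monotone_collapse g huv)]

theorem collapse_collapse_of_le {g g' : Ord1} (h : g ≤ g') (v : TV) :
    collapse g (collapse g' v) = collapse g v := by
  by_cases hv : v ∈ band g'
  · rw [collapse_of_mem hv, collapse_of_mem (Z_mem_band g), collapse_of_mem (band_anti h hv)]
  · rw [collapse_of_notMem hv]

theorem collapse_eq_self_of_le {g g' : Ord1} (h : g ≤ g') {v : TV} (hv : collapse g v = v) :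
    collapse g' v = v := by
  by_cases hb : v ∈ band g
  · rw [collapse_of_mem hb] at hv
    rw [← hv, collapse_of_mem (Z_mem_band g')]
  · exact collapse_of_notMem fun hb' => hb (band_anti h hb')

theorem eq_of_collapse_eq {g : Ord1} {u v : TV} (h : collapse g u = collapse g v)
    (hu : u ∉ band g) : u = v := by
  rw [collapse_of_notMem hu] at h
  by_cases hv : v ∈ band g
  · exact absurd (h.trans (collapse_of_mem hv) ▸ Z_mem_band g) hu
  · rwa [collapse_of_notMem hv] at h

theorem collapse_succ_eq {g : Ord1} {u v : TV} (h : collapse g u = collapse g v)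
    (hT : T g ≤ u ↔ T g ≤ v) (hF : F g < u ↔ F g < v) : collapse g.succ u = collapse g.succ v := by
  by_cases hu : u ∈ band g
  · have hv : v ∈ band g := not_not.1 fun hv => hv (eq_of_collapse_eq h.symm hv ▸ hu)
    by_cases hu' : u ∈ band g.succ
    · have hv' : v ∈ band g.succ := by
        rw [mem_band_succ_iff] at hu' ⊢
        exact ⟨hF.1 hu'.1, not_le.1 (hT.not.1 (not_le.2 hu'.2))⟩
      rw [collapse_of_mem hu', collapse_of_mem hv']
    · rw [mem_band_succ_iff, not_and_or, not_lt, not_lt] at hu'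
      rcases hu' with hu' | hu'
      · rw [le_antisymm hu' hu.1, le_antisymm (not_lt.1 (hF.not.1 hu'.not_gt)) hv.1]
      · rw [le_antisymm hu.2 hu', le_antisymm hv.2 (hT.1 hu')]
  · rw [eq_of_collapse_eq h hu]

theorem collapse_negv_collapse (g : Ord1) (v : TV) :
    collapse g (negv (collapse g v)) = collapse g (negv v) := by
  by_cases hv : v ∈ band g
  · rw [collapse_of_mem hv, negv_Z, collapse_of_mem (Z_mem_band g),
      collapse_of_mem (negv_mem_band hv)]
  · rw [collapse_of_notMem hv]

theorem exists_isLUB (S : Set TV) : ∃ v, IsLUB S v := by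
  by_cases hT : ∃ a, T a ∈ S
  · obtain ⟨a, ha, hmin⟩ := wellFounded_lt.has_min {a | T a ∈ S} hT
    refine ⟨T a, fun v hv => ?_, fun u hu => hu ha⟩
    rcases TV.cases v with ⟨b, rfl⟩ | rfl | ⟨b, rfl⟩
    · exact F_le_T
    · exact Z_le_T
    · exact T_le_T.2 (not_lt.1 (hmin b hv))
  have hle_Z : ∀ v ∈ S, v ≤ Z := fun v hv => by
    rcases TV.cases v with ⟨b, rfl⟩ | rfl | ⟨b, rfl⟩
    · exact F_le_Z
    · exact le_rfl
    · exact absurd ⟨b, hv⟩ hT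
  by_cases hZ : Z ∈ S
  · exact ⟨Z, hle_Z, fun u hu => hu hZ⟩
  have hF : ∀ v ∈ S, ∃ a, v = F a := fun v hv => by
    rcases TV.cases v with ⟨b, rfl⟩ | rfl | ⟨b, rfl⟩
    · exact ⟨b, rfl⟩
    · exact absurd hv hZ
    · exact absurd ⟨b, hv⟩ hT
  by_cases hbdd : ∃ b, ∀ a, F a ∈ S → a ≤ b
  · obtain ⟨b, hb, hmin⟩ := wellFounded_lt.has_min {b | ∀ a, F a ∈ S → a ≤ b} hbdd
    refine ⟨F b, fun v hv => ?_, fun u hu => ?_⟩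
    · obtain ⟨a, rfl⟩ := hF v hv
      exact F_le_F.2 (hb a hv)
    · rcases TV.cases u with ⟨c, rfl⟩ | rfl | ⟨c, rfl⟩
      · exact F_le_F.2 (not_lt.1 (hmin c fun a ha => F_le_F.1 (hu ha)))
      · exact F_le_Z
      · exact F_le_T
  · refine ⟨Z, hle_Z, fun u hu => ?_⟩
    rcases TV.cases u with ⟨c, rfl⟩ | rfl | ⟨c, rfl⟩
    · exact absurd ⟨c, fun a ha => F_le_F.1 (hu ha)⟩ hbdd
    · exact le_rfl
    · exact Z_le_T

theorem isLUB_lub (S : Set TV) : IsLUB S (lub S) := by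
  rw [lub, dif_pos (exists_isLUB S)]
  exact (exists_isLUB S).choose_spec

theorem le_lub {S : Set TV} {v : TV} (h : v ∈ S) : v ≤ lub S := (isLUB_lub S).1 h

theorem lub_le {S : Set TV} {v : TV} (h : ∀ w ∈ S, w ≤ v) : lub S ≤ v := (isLUB_lub S).2 h

theorem lt_lub_iff {S : Set TV} {v : TV} : v < lub S ↔ ∃ w ∈ S, v < w :=
  lt_isLUB_iff (isLUB_lub S)

theorem collapse_lub_image (g : Ord1) (S : Set TV) :
    collapse g (lub (collapse g '' S)) = collapse g (lub S) := by
  set L := lub S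
  set L' := lub (collapse g '' S)
  have hL' : L' ≤ collapse g L :=
    lub_le fun _ ⟨s, hs, hsw⟩ => hsw ▸ monotone_collapse g (le_lub hs)
  have hmem : ∀ s ∈ S, s ∉ band g → s ≤ L' := fun s hs hsb =>
    le_lub ⟨s, hs, collapse_of_notMem hsb⟩
  refine le_antisymm ((monotone_collapse g hL').trans (collapse_collapse_of_le le_rfl L).le) ?_
  by_cases hL : L ∈ band g
  · -- if `L' < F_g`, no value of `S` lies in the band, so `S ⊆ collapse g '' S` and `L ≤ L'`
    suffices hFL' : F g ≤ L' by
      rw [collapse_of_mem hL]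
      by_cases hb : L' ∈ band g
      · rw [collapse_of_mem hb]
      · rw [collapse_of_notMem hb]
        exact (notMem_band_iff.1 hb).resolve_left (not_lt.2 hFL') |>.le.trans' Z_le_T
    by_contra hlt
    rw [not_le] at hlt
    refine not_lt.2 hL.1 (lt_of_le_of_lt (lub_le fun s hs => ?_) hlt)
    by_cases hsb : s ∈ band g
    · have : Z ≤ L' := le_lub ⟨s, hs, collapse_of_mem hsb⟩
      exact absurd (hlt.trans_le' this) (not_lt.2 F_le_Z)
    · exact hmem s hs hsb
  · -- `L` is approached by values of `S` outside the band, which survive the collapse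
    refine monotone_collapse g (le_of_forall_lt fun v hv => ?_)
    rcases notMem_band_iff.1 hL with hL | hL
    · obtain ⟨s, hs, hvs⟩ := lt_lub_iff.1 hv
      exact hvs.trans_le (hmem s hs (notMem_band_iff.2 (Or.inl ((le_lub hs).trans_lt hL))))
    · obtain ⟨s, hs, hvs⟩ := lt_lub_iff.1 (max_lt hv hL)
      exact (le_max_left _ _).trans_lt hvs |>.trans_le
        (hmem s hs (notMem_band_iff.2 (Or.inr ((le_max_right _ _).trans_lt hvs))))

theorem evalBody_cons (I : Interp) (l : Lit) (b : List Lit) :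
    evalBody I (l :: b) = min (evalLit I l) (evalBody I b) := rfl

theorem le_TP {P : Program} {I : Interp} {c : Clause} (hc : c ∈ P) :
    evalBody I c.body ≤ TP P I c.head := le_lub ⟨c, hc, rfl, rfl⟩

theorem lt_TP_iff {P : Program} {I : Interp} {p : ℕ} {v : TV} :
    v < TP P I p ↔ ∃ c ∈ P, c.head = p ∧ v < evalBody I c.body := by
  simp only [TP, lt_lub_iff]
  constructor
  · rintro ⟨_, ⟨c, hc, hh, rfl⟩, hv⟩
    exact ⟨c, hc, hh, hv⟩
  · rintro ⟨c, hc, hh, hv⟩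
    exact ⟨_, ⟨c, hc, hh, rfl⟩, hv⟩

theorem T_le_TP_iff {P : Program} {I : Interp} {p : ℕ} {g : Ord1} :
    T g ≤ TP P I p ↔ ∃ c ∈ P, c.head = p ∧ T g ≤ evalBody I c.body := by
  simp only [← T_succ_lt_iff, lt_TP_iff]

theorem isModel_of_TP_eq {P : Program} {I : Interp} (h : TP P I = I) : isModel P I :=
  fun c hc => (le_TP hc).trans_eq (congrFun h c.head)

/-- `I` and `J` agree on all atoms to which one of them assigns a value of order `< g`. -/
def AgreeBelow (g : Ord1) (I J : Interp) : Prop := ∀ p, collapse g (I p) = collapse g (J p)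

namespace AgreeBelow

variable {g : Ord1} {I J K : Interp}

@[refl] theorem refl (g : Ord1) (I : Interp) : AgreeBelow g I I := fun _ => rfl

@[symm] theorem symm (h : AgreeBelow g I J) : AgreeBelow g J I := fun p => (h p).symm

@[trans] theorem trans (h : AgreeBelow g I J) (h' : AgreeBelow g J K) : AgreeBelow g I K :=
  fun p => (h p).trans (h' p)

theorem mono {g' : Ord1} (hg : g ≤ g') (h : AgreeBelow g' I J) : AgreeBelow g I J := fun p => by
  rw [← collapse_collapse_of_le hg, h p, collapse_collapse_of_le hg]

theorem eq (h : AgreeBelow g I J) {p : ℕ} (hp : I p ∉ band g) : I p = J p :=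
  eq_of_collapse_eq (h p) hp

theorem mem_band_iff (h : AgreeBelow g I J) (p : ℕ) : I p ∈ band g ↔ J p ∈ band g :=
  ⟨fun hI => not_not.1 fun hJ => hJ (h.symm.eq hJ ▸ hI),
    fun hJ => not_not.1 fun hI => hI (h.eq hI ▸ hJ)⟩

theorem lt_F_iff (h : AgreeBelow g I J) (p : ℕ) : I p < F g ↔ J p < F g :=
  ⟨fun hI => h.eq (notMem_band_iff.2 (Or.inl hI)) ▸ hI,
    fun hJ => h.symm.eq (notMem_band_iff.2 (Or.inl hJ)) ▸ hJ⟩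

theorem T_lt_iff (h : AgreeBelow g I J) (p : ℕ) : T g < I p ↔ T g < J p :=
  ⟨fun hI => h.eq (notMem_band_iff.2 (Or.inr hI)) ▸ hI,
    fun hJ => h.symm.eq (notMem_band_iff.2 (Or.inr hJ)) ▸ hJ⟩

theorem of_forall_lt (h : ∀ b < g, AgreeBelow b.succ I J) : AgreeBelow g I J := by
  have key : ∀ v : TV, v ∉ band g → ∃ b < g, v ∉ band b.succ := fun v hv =>
    let ⟨b, hb, hv⟩ := exists_ordOf_eq_of_notMem_band hv
    ⟨b, hb, notMem_band_succ_of_ordOf_eq hv⟩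
  intro p
  by_cases hI : I p ∈ band g
  · by_cases hJ : J p ∈ band g
    · rw [collapse_of_mem hI, collapse_of_mem hJ]
    · obtain ⟨b, hb, hJb⟩ := key _ hJ
      rw [(h b hb).symm.eq hJb]
  · obtain ⟨b, hb, hIb⟩ := key _ hI
    rw [(h b hb).eq hIb]

theorem evalLit (h : AgreeBelow g I J) (l : Lit) :
    collapse g (evalLit I l) = collapse g (evalLit J l) := by
  cases l with
  | pos q => exact h q
  | neg q =>
    simp only [IVS.evalLit]
    rw [← collapse_negv_collapse, h q, collapse_negv_collapse]
  | tt => rfl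
  | ff => rfl

theorem evalBody (h : AgreeBelow g I J) (b : List Lit) :
    collapse g (evalBody I b) = collapse g (evalBody J b) := by
  induction b with
  | nil => rfl
  | cons l b ih =>
    rw [evalBody_cons, evalBody_cons, collapse_min, collapse_min, h.evalLit, ih]

theorem TP {P : Program} (h : AgreeBelow g I J) : AgreeBelow g (TP P I) (TP P J) := by
  intro p
  have hS : collapse g '' {v | ∃ c ∈ P, c.head = p ∧ IVS.evalBody I c.body = v} =
      collapse g '' {v | ∃ c ∈ P, c.head = p ∧ IVS.evalBody J c.body = v} := by
    ext v
    constructor <;> rintro ⟨_, ⟨c, hc, hh, rfl⟩, rfl⟩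
    · exact ⟨_, ⟨c, hc, hh, rfl⟩, (h.evalBody c.body).symm⟩
    · exact ⟨_, ⟨c, hc, hh, rfl⟩, h.evalBody c.body⟩
  simp only [IVS.TP]
  rw [← collapse_lub_image g, hS, collapse_lub_image]

end AgreeBelow

theorem agreeBelow_zero (I J : Interp) : AgreeBelow O0 I J := fun p => by
  rw [collapse_of_mem (mem_band_zero _), collapse_of_mem (mem_band_zero _)]

structure LeAt (g : Ord1) (I J : Interp) : Prop where
  agree : AgreeBelow g I J
  T_le : ∀ p, T g ≤ I p → T g ≤ J p
  F_lt : ∀ p, F g < I p → F g < J p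

namespace LeAt

variable {g : Ord1} {I J K : Interp}

theorem refl (g : Ord1) (I : Interp) : LeAt g I I :=
  ⟨AgreeBelow.refl g I, fun _ => id, fun _ => id⟩

theorem trans (h : LeAt g I J) (h' : LeAt g J K) : LeAt g I K :=
  ⟨h.agree.trans h'.agree, fun p hp => h'.T_le p (h.T_le p hp), fun p hp => h'.F_lt p (h.F_lt p hp)⟩

theorem T_le_evalLit (h : LeAt g I J) {l : Lit} (hl : T g ≤ evalLit I l) :
    T g ≤ evalLit J l := by
  cases l with
  | pos q => exact h.T_le q hl
  | neg q => simpa only [evalLit, T_le_negv_iff, h.agree.lt_F_iff] using hl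
  | tt => exact le_T_zero _
  | ff => exact hl

theorem F_lt_evalLit (h : LeAt g I J) {l : Lit} (hl : F g < evalLit I l) :
    F g < evalLit J l := by
  cases l with
  | pos q => exact h.F_lt q hl
  | neg q => simpa only [evalLit, F_lt_negv_iff, ← not_lt, h.agree.T_lt_iff] using hl
  | tt => exact F_lt_T
  | ff => exact hl

theorem T_le_evalBody (h : LeAt g I J) {b : List Lit} (hb : T g ≤ evalBody I b) :
    T g ≤ evalBody J b := by
  induction b with
  | nil => exact hb
  | cons l b ih =>
    rw [evalBody_cons, le_inf_iff] at hb ⊢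
    exact ⟨h.T_le_evalLit hb.1, ih hb.2⟩

theorem F_lt_evalBody (h : LeAt g I J) {b : List Lit} (hb : F g < evalBody I b) :
    F g < evalBody J b := by
  induction b with
  | nil => exact hb
  | cons l b ih =>
    rw [evalBody_cons, TV.lt_inf_iff] at hb ⊢
    exact ⟨h.F_lt_evalLit hb.1, ih hb.2⟩

theorem TP {P : Program} (h : LeAt g I J) : LeAt g (TP P I) (TP P J) := by
  refine ⟨h.agree.TP, fun p hp => ?_, fun p hp => ?_⟩
  · obtain ⟨c, hc, rfl, hb⟩ := T_le_TP_iff.1 hp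
    exact (h.T_le_evalBody hb).trans (le_TP hc)
  · obtain ⟨c, hc, rfl, hb⟩ := lt_TP_iff.1 hp
    exact (h.F_lt_evalBody hb).trans_le (le_TP hc)

theorem of_forall_succ {I : ℕ → Interp} (hI : ∀ n, LeAt g (I n) (I (n + 1))) {m n : ℕ}
    (hmn : m ≤ n) :
    LeAt g (I m) (I n) := by
  induction n, hmn using Nat.le_induction with
  | base => exact refl g (I m)
  | succ n _ ih => exact ih.trans (hI n)

end LeAt

/-- `M` is the limit of the sequence `I` as far as order `g` can tell. -/
structure IsLimitAt (g : Ord1) (I : ℕ → Interp) (M : Interp) : Prop where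
  agree : ∀ n, AgreeBelow g (I n) M
  T_le_iff : ∀ p, T g ≤ M p ↔ ∃ n, T g ≤ I n p
  F_lt_iff : ∀ p, F g < M p ↔ ∃ n, F g < I n p

namespace IsLimitAt

variable {g : Ord1} {I : ℕ → Interp} {M M' : Interp}

theorem leAt (hM : IsLimitAt g I M) (n : ℕ) : LeAt g (I n) M :=
  ⟨hM.agree n, fun p hp => (hM.T_le_iff p).2 ⟨n, hp⟩, fun p hp => (hM.F_lt_iff p).2 ⟨n, hp⟩⟩

theorem agreeBelow_succ (hM : IsLimitAt g I M) (hM' : IsLimitAt g I M') :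
    AgreeBelow g.succ M M' := fun p =>
  collapse_succ_eq (((hM.agree 0).symm.trans (hM'.agree 0)) p)
    ((hM.T_le_iff p).trans (hM'.T_le_iff p).symm) ((hM.F_lt_iff p).trans (hM'.F_lt_iff p).symm)

theorem shift (hI : ∀ n, LeAt g (I n) (I (n + 1))) (hM : IsLimitAt g I M) :
    IsLimitAt g (fun n => I (n + 1)) M := by
  refine ⟨fun n => hM.agree (n + 1), fun p => (hM.T_le_iff p).trans ?_,
    fun p => (hM.F_lt_iff p).trans ?_⟩
  · exact ⟨fun ⟨n, hn⟩ => ⟨n, (hI n).T_le p hn⟩, fun ⟨n, hn⟩ => ⟨n + 1, hn⟩⟩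
  · exact ⟨fun ⟨n, hn⟩ => ⟨n, (hI n).F_lt p hn⟩, fun ⟨n, hn⟩ => ⟨n + 1, hn⟩⟩

section

variable (hI : ∀ n, LeAt g (I n) (I (n + 1))) (hM : IsLimitAt g I M)
include hI hM

theorem eventually_T_le_evalBody {b : List Lit} (hb : T g ≤ evalBody M b) :
    ∀ᶠ n in Filter.atTop, T g ≤ evalBody (I n) b := by
  induction b with
  | nil => exact Filter.Eventually.of_forall fun _ => hb
  | cons l b ih =>
    rw [evalBody_cons, le_inf_iff] at hb
    obtain ⟨m, hm⟩ : ∃ n, T g ≤ evalLit (I n) l := by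
      cases l with
      | pos q => exact (hM.T_le_iff q).1 hb.1
      | neg q =>
        exact ⟨0, by simpa only [evalLit, T_le_negv_iff, (hM.agree 0).lt_F_iff] using hb.1⟩
      | tt => exact ⟨0, le_T_zero _⟩
      | ff => exact ⟨0, hb.1⟩
    filter_upwards [Filter.eventually_ge_atTop m, ih hb.2] with n hmn hn
    rw [evalBody_cons, le_inf_iff]
    exact ⟨(LeAt.of_forall_succ hI hmn).T_le_evalLit hm, hn⟩

theorem eventually_F_lt_evalBody {b : List Lit} (hb : F g < evalBody M b) :
    ∀ᶠ n in Filter.atTop, F g < evalBody (I n) b := by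
  induction b with
  | nil => exact Filter.Eventually.of_forall fun _ => hb
  | cons l b ih =>
    rw [evalBody_cons, TV.lt_inf_iff] at hb
    obtain ⟨m, hm⟩ : ∃ n, F g < evalLit (I n) l := by
      cases l with
      | pos q => exact (hM.F_lt_iff q).1 hb.1
      | neg q =>
        exact ⟨0, by
          simpa only [evalLit, F_lt_negv_iff, ← not_lt, (hM.agree 0).T_lt_iff] using hb.1⟩
      | tt => exact ⟨0, F_lt_T⟩
      | ff => exact ⟨0, hb.1⟩
    filter_upwards [Filter.eventually_ge_atTop m, ih hb.2] with n hmn hn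
    rw [evalBody_cons, TV.lt_inf_iff]
    exact ⟨(LeAt.of_forall_succ hI hmn).F_lt_evalLit hm, hn⟩

theorem TP {P : Program} : IsLimitAt g (fun n => TP P (I n)) (TP P M) := by
  refine ⟨fun n => (hM.agree n).TP,
    fun p => ⟨fun hp => ?_, fun ⟨n, hn⟩ => (hM.leAt n).TP.T_le p hn⟩,
    fun p => ⟨fun hp => ?_, fun ⟨n, hn⟩ => (hM.leAt n).TP.F_lt p hn⟩⟩
  · obtain ⟨c, hc, rfl, hb⟩ := T_le_TP_iff.1 hp
    obtain ⟨n, hn⟩ := (eventually_T_le_evalBody hI hM hb).exists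
    exact ⟨n, hn.trans (le_TP hc)⟩
  · obtain ⟨c, hc, rfl, hb⟩ := lt_TP_iff.1 hp
    obtain ⟨n, hn⟩ := (eventually_F_lt_evalBody hI hM hb).exists
    exact ⟨n, hn.trans_le (le_TP hc)⟩

end

end IsLimitAt

theorem T_le_iff_of_mem_band {g : Ord1} {v : TV} (h : v ∈ band g) : T g ≤ v ↔ v = T g :=
  ⟨fun h' => le_antisymm h.2 h', fun e => e ▸ le_rfl⟩

theorem F_lt_iff_of_mem_band {g : Ord1} {v : TV} (h : v ∈ band g) : F g < v ↔ v ≠ F g :=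
  ⟨ne_of_gt, fun hne => lt_of_le_of_ne h.1 hne.symm⟩

section TPomega

variable {P : Program} {g : Ord1} {I : Interp} {p : ℕ}

theorem TPomega_of_notMem_band (h : I p ∉ band g) : TPomega P g I p = I p :=
  if_pos (notMem_band_iff_ordOf_lt.1 h)

theorem TPomega_of_mem_band (h : I p ∈ band g) :
    TPomega P g I p = if ∃ n, (TP P)^[n] I p = T g then T g
      else if ∀ n, (TP P)^[n] I p = F g then F g else F g.succ :=
  if_neg (not_lt.2 (mem_band_iff.1 h))

theorem TPomega_notMem_band_succ_or (P : Program) (g : Ord1) (I : Interp) (p : ℕ) :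
    TPomega P g I p ∉ band g.succ ∨ TPomega P g I p = F g.succ := by
  by_cases h : I p ∈ band g
  · rw [TPomega_of_mem_band h]
    split_ifs
    · exact Or.inl (notMem_band_iff.2 (Or.inr (T_lt_T.2 (Ord1.lt_succ g))))
    · exact Or.inl (notMem_band_iff.2 (Or.inl (F_lt_F.2 (Ord1.lt_succ g))))
    · exact Or.inr rfl
  · rw [TPomega_of_notMem_band h]
    exact Or.inl fun h' => h (band_anti (Ord1.lt_succ g).le h')

theorem agreeBelow_TPomega (P : Program) (g : Ord1) (I : Interp) :
    AgreeBelow g (TPomega P g I) I := by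
  intro p
  by_cases h : I p ∈ band g
  · rw [collapse_of_mem h, collapse_of_mem]
    rw [TPomega_of_mem_band h]
    split_ifs
    · exact ⟨F_le_T, le_rfl⟩
    · exact ⟨le_rfl, F_le_T⟩
    · exact ⟨F_le_F.2 (Ord1.lt_succ g).le, F_le_T⟩
  · rw [TPomega_of_notMem_band h]

end TPomega

section Stage

variable {P : Program} {g : Ord1} {J : Interp}

theorem agreeBelow_iterate (hfix : AgreeBelow g (TP P J) J) (n : ℕ) :
    AgreeBelow g ((TP P)^[n] J) J := by
  induction n with
  | zero => exact AgreeBelow.refl g J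
  | succ n ih =>
    rw [Function.iterate_succ_apply']
    exact ih.TP.trans hfix

theorem iterate_apply_of_notMem_band (hfix : AgreeBelow g (TP P J) J) {p : ℕ}
    (h : J p ∉ band g) (n : ℕ) : (TP P)^[n] J p = J p :=
  ((agreeBelow_iterate hfix n).symm.eq h).symm

theorem iterate_apply_mem_band (hfix : AgreeBelow g (TP P J) J) {p : ℕ} (h : J p ∈ band g)
    (n : ℕ) : (TP P)^[n] J p ∈ band g :=
  ((agreeBelow_iterate hfix n).mem_band_iff p).2 h

theorem T_le_TPomega_iff (hfix : AgreeBelow g (TP P J) J) (p : ℕ) :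
    T g ≤ TPomega P g J p ↔ ∃ n, T g ≤ (TP P)^[n] J p := by
  by_cases h : J p ∈ band g
  · rw [T_le_iff_of_mem_band (((agreeBelow_TPomega P g J).mem_band_iff p).2 h),
      exists_congr fun n => T_le_iff_of_mem_band (iterate_apply_mem_band hfix h n),
      TPomega_of_mem_band h]
    split_ifs with h1
    · exact iff_of_true rfl h1
    all_goals exact iff_of_false F_lt_T.ne h1
  · simp only [TPomega_of_notMem_band h, iterate_apply_of_notMem_band hfix h, exists_const]

theorem F_lt_TPomega_iff (hfix : AgreeBelow g (TP P J) J) (p : ℕ) :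
    F g < TPomega P g J p ↔ ∃ n, F g < (TP P)^[n] J p := by
  by_cases h : J p ∈ band g
  · rw [F_lt_iff_of_mem_band (((agreeBelow_TPomega P g J).mem_band_iff p).2 h),
      exists_congr fun n => F_lt_iff_of_mem_band (iterate_apply_mem_band hfix h n),
      ← not_forall, TPomega_of_mem_band h]
    split_ifs with h1 h2
    · obtain ⟨n, hn⟩ := h1
      exact iff_of_true F_lt_T.ne' fun hall => F_lt_T.ne ((hall n).symm.trans hn)
    · exact iff_of_false (not_not.2 rfl) (not_not.2 h2)
    · exact iff_of_true (F_lt_F.2 (Ord1.lt_succ g)).ne' h2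
  · simp only [TPomega_of_notMem_band h, iterate_apply_of_notMem_band hfix h, exists_const]

theorem isLimitAt_TPomega (hfix : AgreeBelow g (TP P J) J) :
    IsLimitAt g (fun n => (TP P)^[n] J) (TPomega P g J) :=
  ⟨fun n => (agreeBelow_iterate hfix n).trans (agreeBelow_TPomega P g J).symm,
    T_le_TPomega_iff hfix, F_lt_TPomega_iff hfix⟩

theorem leAt_TP_self (hJ : ∀ p, J p ∉ band g ∨ J p = F g) (hfix : AgreeBelow g (TP P J) J) :
    LeAt g J (TP P J) := by
  have hfixed : ∀ p, J p ≠ F g → TP P J p = J p := fun p hne =>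
    (hfix.symm.eq ((hJ p).resolve_right hne)).symm
  refine ⟨hfix.symm, fun p hp => ?_, fun p hp => ?_⟩
  · rwa [hfixed p fun e => not_T_le_F (e ▸ hp)]
  · rwa [hfixed p hp.ne']

theorem iterate_leAt (hJ : ∀ p, J p ∉ band g ∨ J p = F g) (hfix : AgreeBelow g (TP P J) J)
    (n : ℕ) : LeAt g ((TP P)^[n] J) ((TP P)^[n + 1] J) := by
  induction n with
  | zero => exact leAt_TP_self hJ hfix
  | succ n ih => simpa only [Function.iterate_succ_apply'] using ih.TP

theorem agreeBelow_succ_TP_TPomega (hJ : ∀ p, J p ∉ band g ∨ J p = F g)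
    (hfix : AgreeBelow g (TP P J) J) :
    AgreeBelow g.succ (TP P (TPomega P g J)) (TPomega P g J) := by
  have hchain := iterate_leAt hJ hfix
  have hlim := isLimitAt_TPomega hfix
  have hTP : IsLimitAt g (fun n => (TP P)^[n + 1] J) (TP P (TPomega P g J)) := by
    simpa only [Function.iterate_succ_apply'] using hlim.TP hchain
  exact hTP.agreeBelow_succ (hlim.shift hchain)

end Stage

theorem Mα_zero (P : Program) : Mα P O0 = TPomega P O0 botI :=
  Ordinal.limitRecOn_zero (motive := fun _ => Interp) (TPomega P O0 botI)
    (fun o ih => if h : o + 1 < ω₁ then TPomega P ⟨o + 1, h⟩ ih else ih)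
    (fun o _ ih => if h : o < ω₁ then TPomega P ⟨o, h⟩ (sqcupI ⟨o, h⟩ ih) else botI)

theorem Mα_succ (P : Program) (α : Ord1) : Mα P α.succ = TPomega P α.succ (Mα P α) :=
  (Ordinal.limitRecOn_add_one (motive := fun _ => Interp) α.1 (TPomega P O0 botI)
    (fun o ih => if h : o + 1 < ω₁ then TPomega P ⟨o + 1, h⟩ ih else ih)
    (fun o _ ih => if h : o < ω₁ then TPomega P ⟨o, h⟩ (sqcupI ⟨o, h⟩ ih) else botI)).trans
    (dif_pos α.succ.2)

theorem Mα_limit (P : Program) (α : Ord1) (h : Order.IsSuccLimit α.1) :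
    Mα P α = TPomega P α (sqcupI α fun β _ => MA P β) :=
  (Ordinal.limitRecOn_limit (motive := fun _ => Interp) α.1 (TPomega P O0 botI)
    (fun o ih => if h : o + 1 < ω₁ then TPomega P ⟨o + 1, h⟩ ih else ih)
    (fun o _ ih => if h : o < ω₁ then TPomega P ⟨o, h⟩ (sqcupI ⟨o, h⟩ ih) else botI) h).trans
    (dif_pos α.2)

theorem Mα_notMem_band_succ_or (P : Program) (α : Ord1) (p : ℕ) :
    Mα P α p ∉ band α.succ ∨ Mα P α p = F α.succ := by
  obtain ⟨J, hJ⟩ : ∃ J, Mα P α = TPomega P α J := by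
    rcases α.zero_or_succ_or_isSuccLimit with rfl | ⟨β, rfl⟩ | h
    · exact ⟨_, Mα_zero P⟩
    · exact ⟨_, Mα_succ P β⟩
    · exact ⟨_, Mα_limit P α h⟩
  rw [hJ]
  exact TPomega_notMem_band_succ_or P α J p

section sqcupI

variable {α : Ord1} {f : ∀ β : Ordinal, β < α.1 → Interp}

theorem sqcupI_notMem_band_or (p : ℕ) : sqcupI α f p ∉ band α ∨ sqcupI α f p = F α := by
  simp only [sqcupI]
  split_ifs with h
  · refine Or.inl (notMem_band_iff_ordOf_lt.2 ?_)
    rw [h.choose_spec.choose_spec]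
    exact WithTop.coe_lt_coe.2 h.choose_spec.choose
  · exact Or.inr rfl

theorem agreeBelow_sqcupI
    (hf : ∀ (β γ : Ord1) (hβ : β.1 < α.1) (hγ : γ.1 < α.1), β ≤ γ →
      AgreeBelow β.succ (f β hβ) (f γ hγ))
    (β : Ord1) (hβ : β.1 < α.1) : AgreeBelow β.succ (sqcupI α f) (f β hβ) := by
  intro p
  simp only [sqcupI]
  split_ifs with h
  · obtain ⟨hc, hord⟩ := h.choose_spec
    set c : Ord1 := ⟨h.choose, hc.trans α.2⟩
    rcases le_total c β with hcβ | hβc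
    · rw [(hf c β hc hβ hcβ).eq (notMem_band_succ_of_ordOf_eq hord)]
    · exact ((hf β c hβ hc hβc) p).symm
  · -- an order `b ≤ β` of `f β p` would already be witnessed by `f b p`
    have hF : F α ∈ band β.succ := ⟨F_le_F.2 (Ord1.succ_le_iff.2 hβ), F_le_T⟩
    rw [collapse_of_mem hF, collapse_of_mem (not_not.1 fun hnot => ?_)]
    obtain ⟨b, hbβ, hb⟩ := exists_ordOf_eq_of_notMem_band hnot
    have hbβ' : b ≤ β := Ord1.lt_succ_iff.1 hbβ
    have hbα : b.1 < α.1 := lt_of_le_of_lt hbβ' hβ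
    have hfb := (hf b β hbα hβ hbβ').symm.eq (notMem_band_succ_of_ordOf_eq hb)
    exact h ⟨b.1, hbα, hfb ▸ hb⟩

end sqcupI

theorem agreeBelow_Mα (P : Program) {α β : Ord1} (h : α ≤ β) :
    AgreeBelow α.succ (Mα P α) (Mα P β) := by
  induction β using Ord1.induction generalizing α with
  | zero => rw [le_antisymm h (Ord1.zero_le α)]
  | succ β ih =>
    rcases h.lt_or_eq with h | rfl
    · rw [Mα_succ]
      exact (ih (Ord1.lt_succ_iff.1 h)).trans
        ((agreeBelow_TPomega P β.succ (Mα P β)).symm.mono (Ord1.succ_le_iff.2 h))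
    · rfl
  | limit β hβ ih =>
    rcases h.lt_or_eq with h | rfl
    · rw [Mα_limit P β hβ]
      exact (agreeBelow_sqcupI (f := fun γ _ => MA P γ)
        (fun γ δ _ hδ hγδ => ih δ hδ hγδ) α h).symm.trans
        ((agreeBelow_TPomega P β _).symm.mono (Ord1.succ_le_iff.2 h))
    · rfl

theorem agreeBelow_succ_TP_Mα (P : Program) (α : Ord1) :
    AgreeBelow α.succ (TP P (Mα P α)) (Mα P α) := by
  induction α using Ord1.induction with
  | zero =>
    rw [Mα_zero]
    exact agreeBelow_succ_TP_TPomega (fun _ => Or.inr rfl) (agreeBelow_zero _ _)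
  | succ α ih =>
    rw [Mα_succ]
    exact agreeBelow_succ_TP_TPomega (Mα_notMem_band_succ_or P α) ih
  | limit α hα ih =>
    have hJ : ∀ β < α, AgreeBelow β.succ (sqcupI α fun β _ => MA P β) (Mα P β) :=
      fun β hβ => agreeBelow_sqcupI (fun _ _ _ _ h => agreeBelow_Mα P h) β hβ
    rw [Mα_limit P α hα]
    refine agreeBelow_succ_TP_TPomega sqcupI_notMem_band_or
      (AgreeBelow.of_forall_lt fun β hβ => ?_)
    exact (hJ β hβ).TP.trans ((ih β hβ).trans (hJ β hβ).symm)

theorem not_countable_Ord1 : ¬ Countable Ord1 := by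
  intro h
  have hsup := Ordinal.iSup_lt_omega_one (f := fun a : Ord1 => a.1) fun a => a.2
  have := Ordinal.le_iSup (fun a : Ord1 => a.1) ⟨_, succ_lt_omega1 hsup⟩
  exact absurd this (not_le.2 (Order.lt_add_one_iff.2 le_rfl))

theorem exists_isDepth (P : Program) : ∃ δ, isDepth P δ := by
  have hne : ∃ δ : Ord1, level (Mα P δ) (T δ) = ∅ ∧ level (Mα P δ) (F δ) = ∅ := by
    by_contra hall
    have hwit : ∀ α : Ord1, ∃ p, Mα P α p ∈ band α ∧ Mα P α p ∉ band α.succ := by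
      intro α
      rcases not_and_or.1 fun h => hall ⟨α, h⟩ with h | h <;>
        obtain ⟨p, hp : Mα P α p = _⟩ := nonempty_iff_ne_empty.2 h <;> refine ⟨p, ?_, ?_⟩ <;>
        rw [hp]
      · exact ⟨F_le_T, le_rfl⟩
      · exact notMem_band_iff.2 (Or.inr (T_lt_T.2 (Ord1.lt_succ α)))
      · exact ⟨le_rfl, F_le_T⟩
      · exact notMem_band_iff.2 (Or.inl (F_lt_F.2 (Ord1.lt_succ α)))
    choose f hf using hwit
    refine not_countable_Ord1 (Function.Injective.countable (f := f) fun α β hαβ => ?_)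
    by_contra hne
    wlog h : α < β generalizing α β
    · exact this β α hαβ.symm (Ne.symm hne) (lt_of_le_of_ne (not_lt.1 h) (Ne.symm hne))
    refine (hf α).2 ?_
    rw [(agreeBelow_Mα P h.le).eq (hf α).2, hαβ]
    exact band_anti (Ord1.succ_le_iff.2 h) (hf β).1
  obtain ⟨δ, hδ, hmin⟩ := wellFounded_lt.has_min _ hne
  exact ⟨δ, hδ, fun β hβ => not_and_or.1 fun h => hmin β h hβ⟩

theorem isDepth_depth (P : Program) : isDepth P (depth P) := by
  rw [depth, dif_pos (exists_isDepth P)]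
  exact (exists_isDepth P).choose_spec

theorem MP_apply (P : Program) (p : ℕ) :
    MP P p = collapse (depth P) (Mα P (depth P) p) := by
  by_cases h : Mα P (depth P) p ∈ band (depth P)
  · rw [collapse_of_mem h]
    exact if_neg (not_lt.2 (mem_band_iff.1 h))
  · rw [collapse_of_notMem h]
    exact if_pos (notMem_band_iff_ordOf_lt.1 h)

theorem agreeBelow_MP (P : Program) : AgreeBelow (depth P).succ (MP P) (Mα P (depth P)) := by
  intro p
  have hδ := (isDepth_depth P).1
  rw [MP_apply]
  rcases Mα_notMem_band_succ_or P (depth P) p with h | h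
  · have h' : Mα P (depth P) p ∉ band (depth P) := fun hb =>
      (eq_F_or_eq_T_of_mem_band hb h).elim (eq_empty_iff_forall_notMem.1 hδ.2 p)
        (eq_empty_iff_forall_notMem.1 hδ.1 p)
    rw [collapse_of_notMem h']
  · rw [h, collapse_of_mem ⟨F_le_F.2 (Ord1.lt_succ _).le, F_le_T⟩, collapse_of_mem (Z_mem_band _),
      collapse_of_mem ⟨le_rfl, F_le_T⟩]

/-- `v` has order at most `g` or is `0`, phrased through thresholds. -/
def OrderAtMost (g : Ord1) (v : TV) : Prop := (F g < v → Z ≤ v) ∧ (Z < v → T g ≤ v)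

theorem OrderAtMost.inf {g : Ord1} {u v : TV} (hu : OrderAtMost g u) (hv : OrderAtMost g v) :
    OrderAtMost g (u ⊓ v) := by
  rcases le_total u v with h | h
  · rwa [inf_eq_left.2 h]
  · rwa [inf_eq_right.2 h]

theorem orderAtMost_of_collapse_eq {g : Ord1} {v : TV} (h : collapse g v = v) :
    OrderAtMost g v ∧ OrderAtMost g (negv v) := by
  by_cases hv : v ∈ band g
  · rw [collapse_of_mem hv] at h
    subst h
    exact ⟨⟨fun _ => le_rfl, fun h => absurd h (lt_irrefl _)⟩,
      ⟨fun _ => le_rfl, fun h => absurd h (lt_irrefl _)⟩⟩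
  · rcases notMem_band_iff.1 hv with hv | hv <;>
      rcases TV.cases v with ⟨b, rfl⟩ | rfl | ⟨b, rfl⟩ <;>
      simp_all [OrderAtMost, Ord1.succ_le_iff, Ord1.lt_succ_iff, le_of_lt]

theorem orderAtMost_evalBody {g : Ord1} {I : Interp} (hI : ∀ q, collapse g (I q) = I q)
    (b : List Lit) : OrderAtMost g (evalBody I b) := by
  induction b with
  | nil => exact ⟨fun _ => Z_le_T, fun _ => le_T_zero _⟩
  | cons l b ih =>
    refine OrderAtMost.inf ?_ ih
    cases l with
    | pos q => exact (orderAtMost_of_collapse_eq (hI q)).1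
    | neg q => exact (orderAtMost_of_collapse_eq (hI q)).2
    | tt => exact ⟨fun _ => Z_le_T, fun _ => le_T_zero _⟩
    | ff => exact ⟨fun h => absurd h (not_lt.2 (F_zero_le _)), fun h => absurd h not_Z_lt_F⟩

theorem collapse_succ_TP {P : Program} {g : Ord1} {I : Interp}
    (hI : ∀ q, collapse g (I q) = I q) (p : ℕ) : collapse g.succ (TP P I p) = TP P I p := by
  by_cases h : TP P I p ∈ band g.succ
  · rw [mem_band_succ_iff] at h
    have hZ_le : Z ≤ TP P I p := by
      obtain ⟨c, hc, rfl, hb⟩ := lt_TP_iff.1 h.1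
      exact ((orderAtMost_evalBody hI c.body).1 hb).trans (le_TP hc)
    have hle_Z : TP P I p ≤ Z := not_lt.1 fun hlt => by
      obtain ⟨c, hc, rfl, hb⟩ := lt_TP_iff.1 hlt
      exact not_le.2 h.2 (((orderAtMost_evalBody hI c.body).2 hb).trans (le_TP hc))
    rw [le_antisymm hle_Z hZ_le, collapse_of_mem (Z_mem_band _)]
  · exact collapse_of_notMem h

theorem TP_MP (P : Program) : TP P (MP P) = MP P := by
  have hMP : ∀ p, collapse (depth P) (MP P p) = MP P p := fun p => by
    rw [MP_apply, collapse_collapse_of_le le_rfl]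
  have hagree : AgreeBelow (depth P).succ (TP P (MP P)) (MP P) :=
    (agreeBelow_MP P).TP.trans ((agreeBelow_succ_TP_Mα P (depth P)).trans (agreeBelow_MP P).symm)
  funext p
  rw [← collapse_succ_TP hMP, hagree p, collapse_eq_self_of_le (Ord1.lt_succ _).le (hMP p)]

/-- `M_P` is a fixpoint of `T_P`, every fixpoint of `T_P` is a model of `P`,
and in particular `M_P` is a model of `P`. -/
theorem MP_fixpoint_and_model (P : Program) :
    TP P (MP P) = MP P ∧ (∀ I : Interp, TP P I = I → isModel P I) ∧ isModel P (MP P) :=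
  ⟨TP_MP P, fun _ => isModel_of_TP_eq, isModel_of_TP_eq (TP_MP P)⟩

end IVS
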